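/- Let N = p_1^{r_1} ⋯ p_ℓ^{r_ℓ} and f(x_1,...,x_μ) = x_1·x_2⋯x_μ. For x sampled uniformly from {0,...,N-1}^μ, P[f(x) ≡ 0 (mod N)] = Π_{i=1}^ℓ I_{1/p_i}(r_i, μ). -/

import Mathlib

/-- The regularized incomplete beta function at integer parameters:
`I_ε(r, μ) = (1-ε)^μ · Σ_{j≥r} C(μ+j-1, j) ε^j`. -/
noncomputable def Ireg (ε : ℝ) (r μ : ℕ) : ℝ :=
  (1 - ε) ^ μ * ∑' j : ℕ, if r ≤ j then ((μ + j - 1).choose j : ℝ) * ε ^ j else 0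

open Finset


lemma Ireg_eq (ε : ℝ) (hε0 : 0 ≤ ε) (hε : ε < 1) (r μ : ℕ) (hμ : 1 ≤ μ) :
    Ireg ε r μ
      = 1 - (1 - ε) ^ μ * ∑ j ∈ Finset.range r, ((μ + j - 1).choose j : ℝ) * ε ^ j := by
  have hnorm : ‖ε‖ < 1 := by rw [Real.norm_eq_abs, abs_of_nonneg hε0]; exact hε
  set g : ℕ → ℝ := fun j => ((j + (μ - 1)).choose (μ - 1) : ℝ) * ε ^ j with hg
  have hgg : ∀ j, ((μ + j - 1).choose j : ℝ) * ε ^ j = g j := by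
    intro j
    have h1 : μ + j - 1 = j + (μ - 1) := by omega
    have h2 : (j + (μ - 1)).choose j = (j + (μ - 1)).choose (μ - 1) := Nat.choose_symm_add
    rw [h1, h2, hg]
  have hsum : Summable g := summable_choose_mul_geometric_of_norm_lt_one (μ - 1) hnorm
  have htsum : ∑' j, g j = 1 / (1 - ε) ^ μ := by
    rw [hg]
    have h := tsum_choose_mul_geometric_of_norm_lt_one (𝕜 := ℝ) (μ - 1) hnorm
    rw [h, show μ - 1 + 1 = μ from by omega]
  set F : ℕ → ℝ := fun j => if r ≤ j then ((μ + j - 1).choose j : ℝ) * ε ^ j else 0 with hF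
  set S : ℝ := (∑' j, g j) - ∑ i ∈ Finset.range r, g i with hS
  have hsum' : Summable (fun n => g (n + r)) := (summable_nat_add_iff r).mpr hsum
  have hHS : HasSum (fun n => g (n + r)) S := by
    have := hsum'.hasSum
    rwa [show (∑' n, g (n + r)) = S by
      rw [hS, ← Summable.sum_add_tsum_nat_add (f := g) r hsum]; ring] at this
  have hFS : HasSum F S := by
    have hinj : Function.Injective (fun n : ℕ => n + r) := add_left_injective r
    rw [← Function.Injective.hasSum_iff hinj ?_]
    · have : (F ∘ fun n : ℕ => n + r) = fun n => g (n + r) := by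
        funext n
        simp only [Function.comp, hF]
        rw [if_pos (Nat.le_add_left r n), hgg]
      rwa [this]
    · intro x hx
      rw [hF]
      simp only
      rw [if_neg]
      intro hle
      exact hx ⟨x - r, Nat.sub_add_cancel hle⟩
  rw [Ireg, hFS.tsum_eq, hS, htsum]
  have hne : (1 - ε) ^ μ ≠ 0 := pow_ne_zero _ (by linarith)
  have h2 : ∑ j ∈ Finset.range r, ((μ + j - 1).choose j : ℝ) * ε ^ j
      = ∑ j ∈ Finset.range r, g j := Finset.sum_congr rfl fun j _ => hgg j
  rw [h2]
  field_simp



lemma card_piAntidiag {ι : Type*} [DecidableEq ι] (s : Finset ι) (j : ℕ) :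
    (s.piAntidiag j).card = (s.card + j - 1).choose j := by
  induction s using Finset.cons_induction generalizing j with
  | empty =>
      rcases Nat.eq_zero_or_pos j with h | h
      · subst h; simp
      · rw [piAntidiag_empty_of_ne_zero (by omega)]
        simp only [card_empty, zero_add, card_empty]
        rw [Nat.choose_eq_zero_of_lt (by omega)]
  | cons i s hi ih =>
      rw [piAntidiag_cons hi, card_disjiUnion]
      simp only [card_map, ih]
      rw [Finset.Nat.sum_antidiagonal_eq_sum_range_succ (f := fun a b => (s.card + b - 1).choose b)]
      rw [card_cons]
      rcases Nat.eq_zero_or_pos s.card with hc | hc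
      · rw [hc]
        have : ∀ x ∈ Finset.range (j + 1), (0 + (j - x) - 1).choose (j - x)
            = if j - x = 0 then 1 else 0 := by
          intro x _
          rcases Nat.eq_zero_or_pos (j - x) with h | h
          · rw [h]; simp
          · rw [if_neg (by omega), Nat.choose_eq_zero_of_lt (by omega)]
        rw [Finset.sum_congr rfl this]
        rw [show (0:ℕ) + 1 + j - 1 = j from by omega, Nat.choose_self]
        rw [← Finset.card_filter]
        have hf : Finset.filter (fun x => j - x = 0) (Finset.range (j + 1)) = {j} := by
          ext x; simp; omega
        rw [hf, Finset.card_singleton]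
      · obtain ⟨d, hd⟩ : ∃ d, s.card = d + 1 := ⟨s.card - 1, by omega⟩
        rw [hd]
        have h1 : ∀ x ∈ Finset.range (j + 1), (d + 1 + (j - x) - 1).choose (j - x)
            = ((j - x) + d).choose d := by
          intro x _
          rw [show d + 1 + (j - x) - 1 = (j - x) + d from by omega]
          exact Nat.choose_symm_add
        rw [Finset.sum_congr rfl h1]
        have h2 : ∑ x ∈ Finset.range (j + 1), ((j - x) + d).choose d
            = ∑ x ∈ Finset.range (j + 1), (x + d).choose d := by
          apply Finset.sum_nbij' (fun x => j - x) (fun x => j - x) <;> intros <;>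
            simp_all <;> omega
        rw [h2, Nat.sum_range_add_choose j d]
        rw [show d + 1 + 1 + j - 1 = j + (d + 1) from by omega]
        rw [show (j + d + 1).choose (d+1) = (j + (d+1)).choose (d+1) from by ring_nf]
        exact (Nat.choose_symm_add).symm



lemma card_dvd_range (d q : ℕ) (hd : 0 < d) (hdvd : d ∣ q) :
    ((Finset.range q).filter (d ∣ ·)).card = q / d := by
  rw [← Finset.card_range (q / d)]
  apply Finset.card_bij' (fun x _ => x / d) (fun y _ => d * y)
  · intro x hx
    simp only [mem_filter, mem_range] at hx
    simp only [mem_range]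
    exact Nat.div_lt_div_of_lt_of_dvd hdvd hx.1
  · intro y hy
    simp only [mem_range] at hy
    simp only [mem_filter, mem_range]
    exact ⟨(Nat.lt_div_iff_mul_lt' hdvd y).mp hy, Dvd.intro y rfl⟩
  · intro x hx
    simp only [mem_filter] at hx
    exact Nat.mul_div_cancel' hx.2
  · intro y _
    exact Nat.mul_div_cancel_left y hd

lemma card_fin_filter (n : ℕ) (P : ℕ → Prop) [DecidablePred P] :
    (Finset.univ.filter (fun y : Fin n => P (y : ℕ))).card
      = ((Finset.range n).filter P).card := by
  rw [← Nat.Iio_eq_range, ← Fin.map_valEmbedding_univ, Finset.filter_map, Finset.card_map]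
  congr 1

lemma card_val_fin (p : ℕ) (hp : p.Prime) (r v : ℕ) (hv : v < r) :
    (Finset.univ.filter
        (fun y : Fin (p ^ r) => (y : ℕ) ≠ 0 ∧ (y : ℕ).factorization p = v)).card
      = (p - 1) * p ^ (r - 1 - v) := by
  have hp1 : 1 < p := hp.one_lt
  -- rewrite the condition
  have hcond : ∀ y : ℕ, ((y ≠ 0 ∧ y.factorization p = v) ↔ (p ^ v ∣ y ∧ ¬ p ^ (v+1) ∣ y)) := by
    intro y
    constructor
    · rintro ⟨hy0, hyv⟩
      refine ⟨?_, ?_⟩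
      · rw [← hyv]; exact Nat.ordProj_dvd y p
      · rw [Nat.Prime.pow_dvd_iff_le_factorization hp hy0, hyv]; omega
    · rintro ⟨h1, h2⟩
      have hy0 : y ≠ 0 := by rintro rfl; exact h2 (dvd_zero _)
      have hle : v ≤ y.factorization p := by
        rwa [← Nat.Prime.pow_dvd_iff_le_factorization hp hy0]
      have hlt : y.factorization p < v + 1 := by
        by_contra h
        exact h2 ((Nat.Prime.pow_dvd_iff_le_factorization hp hy0).mpr (by omega))
      omega
  rw [show (Finset.univ.filter
        (fun y : Fin (p ^ r) => (y : ℕ) ≠ 0 ∧ (y : ℕ).factorization p = v)).card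
      = ((Finset.range (p ^ r)).filter
          (fun y => y ≠ 0 ∧ y.factorization p = v)).card
    from card_fin_filter (p ^ r) (fun y => y ≠ 0 ∧ y.factorization p = v)]
  have hset : (Finset.range (p ^ r)).filter (fun y => y ≠ 0 ∧ y.factorization p = v)
      = (Finset.range (p ^ r)).filter (fun y => p ^ v ∣ y ∧ ¬ p ^ (v+1) ∣ y) := by
    apply Finset.filter_congr
    intro y _
    exact iff_iff_implies_and_implies .. |>.mpr ⟨fun h => (hcond y).mp h, fun h => (hcond y).mpr h⟩
  rw [hset]
  -- now count via difference
  have hsplit : ((Finset.range (p ^ r)).filter (p ^ v ∣ ·)).card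
      = ((Finset.range (p ^ r)).filter (fun y => p ^ v ∣ y ∧ p ^ (v+1) ∣ y)).card
        + ((Finset.range (p ^ r)).filter (fun y => p ^ v ∣ y ∧ ¬ p ^ (v+1) ∣ y)).card := by
    rw [← Finset.filter_filter, ← Finset.filter_filter]
    exact (Finset.card_filter_add_card_filter_not (p ^ (v+1) ∣ ·)).symm
  have heq1 : (Finset.range (p ^ r)).filter (fun y => p ^ v ∣ y ∧ p ^ (v+1) ∣ y)
      = (Finset.range (p ^ r)).filter (p ^ (v+1) ∣ ·) := by
    apply Finset.filter_congr
    intro y _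
    constructor
    · exact fun h => h.2
    · exact fun h => ⟨dvd_trans (pow_dvd_pow p (by omega)) h, h⟩
  have hc1 := card_dvd_range (p ^ v) (p ^ r) (pow_pos (by omega) v) (pow_dvd_pow p (by omega))
  have hc2 := card_dvd_range (p ^ (v+1)) (p ^ r) (pow_pos (by omega) (v+1))
    (pow_dvd_pow p (by omega))
  rw [heq1, hc2] at hsplit
  rw [hc1] at hsplit
  have hd1 : p ^ r / p ^ v = p ^ (r - v) := Nat.pow_div (by omega) (by omega)
  have hd2 : p ^ r / p ^ (v+1) = p ^ (r - (v+1)) := Nat.pow_div (by omega) (by omega)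
  rw [hd1, hd2] at hsplit
  have hkey : p ^ (r - v) = p * p ^ (r - 1 - v) := by
    rw [← pow_succ']
    congr 1
    omega
  have hkey2 : r - (v + 1) = r - 1 - v := by omega
  rw [hkey2] at hsplit
  have : (p - 1) * p ^ (r - 1 - v) = p ^ (r - v) - p ^ (r - 1 - v) := by
    rw [hkey, Nat.sub_mul, one_mul]
  omega

lemma card_pi_filter {μ q : ℕ} (P : Fin μ → Fin q → Prop) [∀ i y, Decidable (P i y)] :
    (Finset.univ.filter (fun x : Fin μ → Fin q => ∀ i, P i (x i))).card
      = ∏ i, (Finset.univ.filter (P i)).card := by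
  rw [← Fintype.card_subtype]
  rw [Fintype.card_congr (Equiv.subtypePiEquivPi (p := P))]
  rw [Fintype.card_pi]
  exact Finset.prod_congr rfl fun i _ => Fintype.card_subtype _




lemma card_not_dvd (p : ℕ) (hp : p.Prime) (r μ : ℕ) (hr : 1 ≤ r) (hμ : 1 ≤ μ) :
    (Finset.univ.filter
        (fun x : Fin μ → Fin (p ^ r) => ¬ p ^ r ∣ ∏ i, (x i : ℕ))).card
      = ∑ j ∈ Finset.range r,
          (μ + j - 1).choose j * ((p - 1) ^ μ * p ^ ((r - 1) * μ - j)) := by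
  classical
  have hp1 : 1 < p := hp.one_lt
  set T := Finset.univ.filter
      (fun x : Fin μ → Fin (p ^ r) => ¬ p ^ r ∣ ∏ i, (x i : ℕ)) with hT
  have hTmem : ∀ x ∈ T, (∀ i, (x i : ℕ) ≠ 0)
      ∧ (∑ i, (x i : ℕ).factorization p) < r := by
    intro x hx
    rw [hT, mem_filter] at hx
    have hnd := hx.2
    have hnz : ∀ i, (x i : ℕ) ≠ 0 := by
      intro i h0
      exact hnd (by rw [Finset.prod_eq_zero (Finset.mem_univ i) h0]; exact dvd_zero _)
    refine ⟨hnz, ?_⟩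
    have hprod : (∏ i, (x i : ℕ)) ≠ 0 :=
      Finset.prod_ne_zero_iff.mpr fun i _ => hnz i
    have hfact : (∏ i, (x i : ℕ)).factorization p
        = ∑ i, (x i : ℕ).factorization p := by
      rw [Nat.factorization_prod (fun i _ => hnz i)]
      exact Finset.sum_apply' p
    by_contra h
    push_neg at h
    exact hnd ((Nat.Prime.pow_dvd_iff_le_factorization hp hprod).mpr (by omega))
  set g : (Fin μ → Fin (p ^ r)) → (Fin μ → ℕ) :=
      fun x i => (x i : ℕ).factorization p with hg
  have hmaps : ∀ x ∈ T, g x ∈ Fintype.piFinset (fun _ : Fin μ => Finset.range r) := by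
    intro x hx
    rw [Fintype.mem_piFinset]
    intro i
    rw [Finset.mem_range]
    calc (x i : ℕ).factorization p ≤ ∑ i, (x i : ℕ).factorization p :=
          Finset.single_le_sum (f := fun i => ((x i : ℕ)).factorization p)
            (fun _ _ => Nat.zero_le _) (Finset.mem_univ i)
      _ < r := (hTmem x hx).2
  rw [Finset.card_eq_sum_card_fiberwise hmaps]
  -- compute fibers
  have hfiber : ∀ k ∈ Fintype.piFinset (fun _ : Fin μ => Finset.range r),
      (T.filter (fun x => g x = k)).card
        = if (∑ i, k i) < r then ∏ i, ((p - 1) * p ^ (r - 1 - k i)) else 0 := by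
    intro k hk
    rw [Fintype.mem_piFinset] at hk
    by_cases hsum : (∑ i, k i) < r
    · rw [if_pos hsum]
      have hki : ∀ i, k i < r := fun i => Finset.mem_range.mp (hk i)
      have hset : T.filter (fun x => g x = k)
          = Finset.univ.filter
              (fun x : Fin μ → Fin (p ^ r) =>
                ∀ i, ((x i : ℕ) ≠ 0 ∧ (x i : ℕ).factorization p = k i)) := by
        ext x
        simp only [Finset.mem_filter, Finset.mem_univ, true_and]
        constructor
        · rintro ⟨hxT, hgx⟩
          intro i
          exact ⟨(hTmem x hxT).1 i, by rw [← hgx]⟩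
        · intro h
          have hnz : ∀ i, (x i : ℕ) ≠ 0 := fun i => (h i).1
          have hgx : g x = k := funext fun i => (h i).2
          refine ⟨?_, hgx⟩
          rw [hT, mem_filter]
          refine ⟨Finset.mem_univ _, ?_⟩
          have hprod : (∏ i, (x i : ℕ)) ≠ 0 :=
            Finset.prod_ne_zero_iff.mpr fun i _ => hnz i
          have hfact : (∏ i, (x i : ℕ)).factorization p
              = ∑ i, (x i : ℕ).factorization p := by
            rw [Nat.factorization_prod (fun i _ => hnz i)]
            exact Finset.sum_apply' p
          intro hdvd
          have := (Nat.Prime.pow_dvd_iff_le_factorization hp hprod).mp hdvd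
          rw [hfact] at this
          have hsum2 : ∑ i, (x i : ℕ).factorization p = ∑ i, k i :=
            Finset.sum_congr rfl fun i _ => (h i).2
          omega
      rw [hset]
      rw [card_pi_filter (fun i y => ((y : ℕ) ≠ 0 ∧ (y : ℕ).factorization p = k i))]
      exact Finset.prod_congr rfl fun i _ => card_val_fin p hp r (k i) (hki i)
    · rw [if_neg hsum]
      rw [Finset.card_eq_zero]
      rw [Finset.eq_empty_iff_forall_notMem]
      intro x hx
      rw [Finset.mem_filter] at hx
      have h1 := (hTmem x hx.1).2
      have h2 : ∑ i, (x i : ℕ).factorization p = ∑ i, k i :=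
        Finset.sum_congr rfl fun i _ => congrFun hx.2 i
      omega
  rw [Finset.sum_congr rfl hfiber]
  rw [Finset.sum_ite, Finset.sum_const_zero, add_zero]
  -- identify the filtered set with a biUnion of piAntidiag
  have hbi : (Fintype.piFinset (fun _ : Fin μ => Finset.range r)).filter
        (fun k : Fin μ → ℕ => (∑ i, k i) < r)
      = (Finset.range r).biUnion (fun j => Finset.piAntidiag Finset.univ j) := by
    ext k
    simp only [Finset.mem_filter, Fintype.mem_piFinset, Finset.mem_range,
      Finset.mem_biUnion, Finset.mem_piAntidiag]
    constructor
    · rintro ⟨-, hs⟩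
      exact ⟨∑ i, k i, hs, rfl, fun i _ => Finset.mem_univ i⟩
    · rintro ⟨j, hj, hsum, -⟩
      subst hsum
      refine ⟨fun i => ?_, hj⟩
      calc k i ≤ ∑ i, k i :=
            Finset.single_le_sum (fun _ _ => Nat.zero_le _) (Finset.mem_univ i)
        _ < r := hj
  rw [hbi]
  rw [Finset.sum_biUnion ?hdisj]
  case hdisj =>
    intro a ha b hb hab
    simp only [Finset.disjoint_left]
    intro k hka hkb
    rw [Finset.mem_piAntidiag] at hka hkb
    exact hab (hka.1 ▸ hkb.1 ▸ rfl)
  apply Finset.sum_congr rfl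
  intro j hj
  rw [Finset.mem_range] at hj
  have hinner : ∀ k ∈ Finset.piAntidiag (Finset.univ : Finset (Fin μ)) j,
      ∏ i, ((p - 1) * p ^ (r - 1 - k i)) = (p - 1) ^ μ * p ^ ((r - 1) * μ - j) := by
    intro k hk
    rw [Finset.mem_piAntidiag] at hk
    have hsk : ∑ i, k i = j := hk.1
    have hki : ∀ i, k i ≤ r - 1 := by
      intro i
      have : k i ≤ ∑ i, k i :=
        Finset.single_le_sum (fun _ _ => Nat.zero_le _) (Finset.mem_univ i)
      omega
    rw [Finset.prod_mul_distrib, Finset.prod_const, Finset.card_univ, Fintype.card_fin]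
    congr 1
    rw [Finset.prod_pow_eq_pow_sum]
    congr 1
    have : ∑ i, (r - 1 - k i) + ∑ i, k i = ∑ i : Fin μ, (r - 1) := by
      rw [← Finset.sum_add_distrib]
      exact Finset.sum_congr rfl fun i _ => by have := hki i; omega
    rw [Finset.sum_const, Finset.card_univ, Fintype.card_fin, smul_eq_mul,
      Nat.mul_comm] at this
    have hj' : j ≤ (r - 1) * μ := by
      calc j ≤ r - 1 := by omega
        _ ≤ (r - 1) * μ := Nat.le_mul_of_pos_right _ (by omega)
    omega
  rw [Finset.sum_congr rfl hinner, Finset.sum_const, card_piAntidiag, Finset.card_univ,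
    Fintype.card_fin, smul_eq_mul]



lemma card_dvd_real (p : ℕ) (hp : p.Prime) (r μ : ℕ) (hr : 1 ≤ r) (hμ : 1 ≤ μ) :
    ((Finset.univ.filter
        (fun x : Fin μ → Fin (p ^ r) => p ^ r ∣ ∏ i, (x i : ℕ))).card : ℝ)
      = Ireg (1 / (p : ℝ)) r μ * (p : ℝ) ^ (r * μ) := by
  classical
  have hp1 : 1 < p := hp.one_lt
  have hpR : (1 : ℝ) < (p : ℝ) := by exact_mod_cast hp1
  have hp0 : (0 : ℝ) < (p : ℝ) := by linarith
  have hcards := Finset.card_filter_add_card_filter_not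
    (s := (Finset.univ : Finset (Fin μ → Fin (p ^ r))))
    (p := fun x => p ^ r ∣ ∏ i, (x i : ℕ))
  rw [Finset.card_univ] at hcards
  have hcard_univ : Fintype.card (Fin μ → Fin (p ^ r)) = p ^ (r * μ) := by
    rw [Fintype.card_fun, Fintype.card_fin, Fintype.card_fin, ← pow_mul]
  rw [hcard_univ] at hcards
  have hneg := card_not_dvd p hp r μ hr hμ
  -- convert to reals
  have hmain : ((Finset.univ.filter
      (fun x : Fin μ → Fin (p ^ r) => p ^ r ∣ ∏ i, (x i : ℕ))).card : ℝ)
      = (p : ℝ) ^ (r * μ)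
        - ∑ j ∈ Finset.range r,
            ((μ + j - 1).choose j : ℝ) * (((p : ℝ) - 1) ^ μ * (p : ℝ) ^ ((r - 1) * μ - j)) := by
    have h1 : ((Finset.univ.filter
        (fun x : Fin μ → Fin (p ^ r) => ¬ p ^ r ∣ ∏ i, (x i : ℕ))).card : ℝ)
        = ∑ j ∈ Finset.range r,
            ((μ + j - 1).choose j : ℝ) * (((p : ℝ) - 1) ^ μ * (p : ℝ) ^ ((r - 1) * μ - j)) := by
      rw [hneg]
      push_cast [Nat.cast_sub hp1.le]
      ring
    have h2 : ((Finset.univ.filter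
        (fun x : Fin μ → Fin (p ^ r) => p ^ r ∣ ∏ i, (x i : ℕ))).card : ℝ)
        + ((Finset.univ.filter
        (fun x : Fin μ → Fin (p ^ r) => ¬ p ^ r ∣ ∏ i, (x i : ℕ))).card : ℝ)
        = (p : ℝ) ^ (r * μ) := by
      exact_mod_cast congrArg (Nat.cast : ℕ → ℝ) hcards
    linarith
  rw [hmain, Ireg_eq _ (by positivity) (by rw [div_lt_one hp0]; exact hpR) r μ hμ]
  clear hcards hcard_univ hneg hmain
  have hterm : ∀ j ∈ Finset.range r,
      ((μ + j - 1).choose j : ℝ) * (1 / (p : ℝ)) ^ j * ((1 - 1 / (p : ℝ)) ^ μ * (p : ℝ) ^ (r * μ))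
        = ((μ + j - 1).choose j : ℝ) * (((p : ℝ) - 1) ^ μ * (p : ℝ) ^ ((r - 1) * μ - j)) := by
    intro j hj
    rw [Finset.mem_range] at hj
    have hexp : (r - 1) * μ - j + (μ + j) = r * μ := by
      have hj' : j ≤ (r - 1) * μ := by
        have h1 : j ≤ r - 1 := by omega
        have h2 := Nat.mul_le_mul h1 hμ
        simpa using h2
      have h2 : (r - 1) * μ + μ = r * μ := by
        have h3 : r - 1 + 1 = r := by omega
        calc (r - 1) * μ + μ = (r - 1 + 1) * μ := by ring
          _ = r * μ := by rw [h3]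
      omega
    have hppow : (p : ℝ) ^ (r * μ)
        = (p : ℝ) ^ ((r - 1) * μ - j) * ((p : ℝ) ^ μ * (p : ℝ) ^ j) := by
      rw [← pow_add, ← pow_add, hexp]
    have h1p : (1 : ℝ) - 1 / (p : ℝ) = ((p : ℝ) - 1) / (p : ℝ) := by
      field_simp
    have hpne : (p : ℝ) ≠ 0 := ne_of_gt hp0
    rw [h1p, hppow]
    simp only [div_pow, one_pow]
    field_simp
  rw [sub_mul, one_mul]
  congr 1
  rw [mul_comm ((1 - 1 / (p : ℝ)) ^ μ), mul_assoc, Finset.sum_mul]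
  exact (Finset.sum_congr rfl hterm).symm



lemma zcount_eq_card (μ M : ℕ) (hM : M ≠ 0) :
    Nat.card {x : Fin μ → ZMod M // ∏ i, x i = 0}
      = (Finset.univ.filter
          (fun x : Fin μ → Fin M => (∏ i, (x i : ℕ)) % M = 0)).card := by
  haveI := NeZero.mk hM
  classical
  rw [Nat.card_eq_fintype_card, ← Fintype.card_subtype]
  apply Fintype.card_congr
  refine Equiv.subtypeEquiv (Equiv.piCongrRight fun _ =>
    (⟨fun z => ⟨z.val, ZMod.val_lt z⟩, fun y => ((y : ℕ) : ZMod M),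
      fun z => by simp [ZMod.natCast_zmod_val],
      fun y => by
        apply Fin.ext
        simp [ZMod.val_cast_of_lt y.isLt]⟩ : ZMod M ≃ Fin M)) ?_
  intro x
  show (∏ i, x i = 0) ↔ (∏ i, (x i).val) % M = 0
  rw [← Nat.dvd_iff_mod_eq_zero,
    ← ZMod.natCast_eq_zero_iff]
  rw [Nat.cast_prod]
  constructor
  · intro h0
    rw [show (∏ i, ((x i).val : ZMod M)) = ∏ i, x i from
      Finset.prod_congr rfl fun i _ => ZMod.natCast_zmod_val _]
    exact h0
  · intro h0
    rw [show (∏ i, ((x i).val : ZMod M)) = ∏ i, x i from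
      Finset.prod_congr rfl fun i _ => ZMod.natCast_zmod_val _] at h0
    exact h0

lemma zcount_mul (μ m n : ℕ) (hm : m ≠ 0) (hn : n ≠ 0) (h : Nat.Coprime m n) :
    Nat.card {x : Fin μ → ZMod (m * n) // ∏ i, x i = 0}
      = Nat.card {x : Fin μ → ZMod m // ∏ i, x i = 0}
        * Nat.card {x : Fin μ → ZMod n // ∏ i, x i = 0} := by
  haveI := NeZero.mk hm
  haveI := NeZero.mk hn
  haveI := NeZero.mk (mul_ne_zero hm hn)
  rw [← Nat.card_prod]
  apply Nat.card_congr
  have e1 := ZMod.chineseRemainder h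
  have E1 : {x : Fin μ → ZMod (m * n) // ∏ i, x i = 0}
      ≃ {y : Fin μ → ZMod m × ZMod n // ∏ i, y i = 0} := by
    refine Equiv.subtypeEquiv (Equiv.piCongrRight fun _ => e1.toEquiv) ?_
    intro x
    show (∏ i, x i = 0) ↔ (∏ i, e1 (x i) = 0)
    rw [show (∏ i, e1 (x i)) = e1 (∏ i, x i) from (map_prod e1 _ _).symm]
    constructor
    · intro h0; rw [h0, map_zero]
    · intro h0; exact e1.injective (h0.trans (map_zero e1).symm)
  have E2 : {y : Fin μ → ZMod m × ZMod n // ∏ i, y i = 0}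
      ≃ {z : (Fin μ → ZMod m) × (Fin μ → ZMod n) //
          (∏ i, z.1 i = 0) ∧ (∏ i, z.2 i = 0)} := by
    refine Equiv.subtypeEquiv (Equiv.arrowProdEquivProdArrow _ _ _) ?_
    intro y
    show (∏ i, y i = 0) ↔ ((∏ i, (y i).1 = 0) ∧ (∏ i, (y i).2 = 0))
    rw [Prod.ext_iff, Prod.fst_prod, Prod.snd_prod]
    rfl
  have E3 : {z : (Fin μ → ZMod m) × (Fin μ → ZMod n) //
        (∏ i, z.1 i = 0) ∧ (∏ i, z.2 i = 0)}
      ≃ {a : Fin μ → ZMod m // ∏ i, a i = 0}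
        × {b : Fin μ → ZMod n // ∏ i, b i = 0} :=
    Equiv.subtypeProdEquivProd (p := fun a : Fin μ → ZMod m => ∏ i, a i = 0)
      (q := fun b : Fin μ → ZMod n => ∏ i, b i = 0)
  exact E1.trans (E2.trans E3)

lemma zcount_one (μ : ℕ) :
    Nat.card {x : Fin μ → ZMod 1 // ∏ i, x i = 0} = 1 := by
  haveI : Unique {x : Fin μ → ZMod 1 // ∏ i, x i = 0} :=
    ⟨⟨⟨fun _ => 0, Subsingleton.elim _ _⟩⟩, fun a => Subtype.ext (funext fun i =>
      Subsingleton.elim _ _)⟩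
  exact Nat.card_unique

lemma zcount_prod {ι : Type*} [DecidableEq ι] (μ : ℕ) (q : ι → ℕ) (hq : ∀ i, q i ≠ 0)
    (hcop : ∀ i j, i ≠ j → Nat.Coprime (q i) (q j)) (s : Finset ι) :
    Nat.card {x : Fin μ → ZMod (∏ i ∈ s, q i) // ∏ i, x i = 0}
      = ∏ i ∈ s, Nat.card {x : Fin μ → ZMod (q i) // ∏ i, x i = 0} := by
  induction s using Finset.cons_induction with
  | empty => rw [Finset.prod_empty, Finset.prod_empty]; exact zcount_one μ
  | cons i s hi ih =>
      rw [Finset.prod_cons, Finset.prod_cons, ← ih]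
      exact zcount_mul μ (q i) (∏ j ∈ s, q j) (hq i)
        (Finset.prod_ne_zero_iff.mpr fun j _ => hq j)
        (Nat.Coprime.prod_right fun j hj => hcop i j (fun hij => hi (hij ▸ hj)))


open Classical in
/-- For `N = ∏ pᵢ^{rᵢ}` and `f(x₁,...,x_μ) = x₁⋯x_μ`, with `x` uniform on
`{0,...,N-1}^μ`: `P[f(x) ≡ 0 (mod N)] = ∏ᵢ I_{1/pᵢ}(rᵢ, μ)`. -/
theorem stmt9 (μn ℓ : ℕ) (hμ : 1 ≤ μn)
    (p r : Fin ℓ → ℕ) (hp : ∀ i, (p i).Prime) (hr : ∀ i, 1 ≤ r i)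
    (hinj : Function.Injective p)
    (N : ℕ) (hN : N = ∏ i, p i ^ r i) :
    ((Finset.univ.filter
          (fun x : Fin μn → Fin N => (∏ i, (x i : ℕ)) % N = 0)).card : ℝ)
        / (N : ℝ) ^ μn
      = ∏ i, Ireg (1 / (p i : ℝ)) (r i) μn := by
  classical
  subst hN
  set q : Fin ℓ → ℕ := fun i => p i ^ r i with hqdef
  have hq0 : ∀ i, q i ≠ 0 := fun i => pow_ne_zero _ (hp i).pos.ne'
  have hcop : ∀ i j, i ≠ j → Nat.Coprime (q i) (q j) := fun i j hij =>
    Nat.Coprime.pow _ _ ((Nat.coprime_primes (hp i) (hp j)).mpr (fun h => hij (hinj h)))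
  have hN0 : (∏ i, q i) ≠ 0 := Finset.prod_ne_zero_iff.mpr fun i _ => hq0 i
  have hfac : ∀ i, (Nat.card {x : Fin μn → ZMod (q i) // ∏ j, x j = 0} : ℝ)
      = Ireg (1 / (p i : ℝ)) (r i) μn * (p i : ℝ) ^ (r i * μn) := by
    intro i
    rw [zcount_eq_card μn (q i) (hq0 i)]
    rw [show (Finset.univ.filter
          (fun x : Fin μn → Fin (q i) => (∏ j, (x j : ℕ)) % (q i) = 0))
        = (Finset.univ.filter
          (fun x : Fin μn → Fin (p i ^ r i) => p i ^ r i ∣ ∏ j, (x j : ℕ)))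
      from Finset.filter_congr fun x _ => (Nat.dvd_iff_mod_eq_zero).symm]
    exact card_dvd_real (p i) (hp i) (r i) μn (hr i) hμ
  have hnum : ((Finset.univ.filter
      (fun x : Fin μn → Fin (∏ i, q i) => (∏ i, (x i : ℕ)) % (∏ i, q i) = 0)).card : ℝ)
      = ∏ i, (Ireg (1 / (p i : ℝ)) (r i) μn * (p i : ℝ) ^ (r i * μn)) := by
    rw [← zcount_eq_card μn (∏ i, q i) hN0]
    rw [zcount_prod μn q hq0 hcop Finset.univ]
    rw [Nat.cast_prod]
    exact Finset.prod_congr rfl fun i _ => hfac i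
  rw [hnum]
  have hden : ((∏ i, q i : ℕ) : ℝ) ^ μn = ∏ i, (p i : ℝ) ^ (r i * μn) := by
    simp only [hqdef]
    push_cast
    rw [← Finset.prod_pow]
    exact Finset.prod_congr rfl fun i _ => by rw [← pow_mul]
  rw [hden, Finset.prod_mul_distrib]
  have hPne : (∏ i, (p i : ℝ) ^ (r i * μn)) ≠ 0 :=
    Finset.prod_ne_zero_iff.mpr fun i _ =>
      pow_ne_zero _ (by exact_mod_cast (hp i).pos.ne')
  rw [mul_div_assoc, div_self hPne, mul_one]
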